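/- arXiv:2502.04746 — 7 statements merged into one kernel-verified Lean document; each statement's English description precedes it below -/
import Mathlib

section
/- Let $a_1,\ldots,a_k$ be distinct elements of a field $F$, and write $\prod_{i=1}^{k}(x - a_i) = \sum_{j=0}^{k} c_j x^{k-j}$ (so $c_0 = 1$). Fix $t \geq 0$ and define $e_0 = 1$, $e_i = -\sum_{j=0}^{i-1} e_j c_{i-j}$ for $1 \leq i \leq t$ (with $c_m = 0$ for $m > k$). Define $f_{t,s} = -\sum_{i=0}^{\min\{t,s\}} c_{i+k-s} e_{t-i}$ for $0 \leq s \leq k-1$. Then for every $1 \leq r \leq k$, $a_r^{k+t} = \sum_{s=0}^{k-1} f_{t,s} a_r^{s}$. -/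
/-! The recurrence for `e` says that `∑ e_i y^i` inverts the reversed polynomial `∑ c_j y^j`
up to order `t`, i.e. `∑_{i+j=n} e_i c_j = δ_{n,0}` for `n ≤ t`. Consequently
`x^{k+t} = (∑_{i≤t} e_i x^{t-i}) P(x) + ∑_{s<k} f_{t,s} x^s` with `P = ∏ (x - a_i)`: the `f_{t,s}`
are the coefficients of `x^{k+t} mod P`, and evaluating at a root `a_r` of `P` gives the claim.
Concretely, `a_r^i P(a_r) = 0` turns each tail `∑_{s<k} c_{i+k-s} a_r^s` into minus the head
`∑_{j≤i} c_j a_r^{i+k-j}`, and the double sum that remains collapses by the convolution identity. -/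

open Finset Polynomial

namespace Polynomial

theorem Monic.eq_one_of_eq_sum_C_mul_X_pow_sub {R : Type*} [Semiring R] {p : R[X]} {k : ℕ}
    (hp : p.Monic) (hdeg : p.natDegree = k) {c : ℕ → R}
    (hc : p = ∑ j ∈ range (k + 1), C (c j) * X ^ (k - j)) : c 0 = 1 := by
  have h := congrArg (coeff · k) hc
  simp only [finsetSum_coeff, coeff_C_mul, coeff_X_pow] at h
  rw [← hdeg, hp.coeff_natDegree, hdeg, sum_eq_single 0] at h
  · simpa using h.symm
  · intro j hj hj0
    simp only [mem_range] at hj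
    simp [show k ≠ k - j by omega]
  · simp

end Polynomial

section

variable {R : Type*} [CommRing R]

theorem sum_mul_sub_eq_ite_of_recurrence {c e : ℕ → R} {t : ℕ} (hc0 : c 0 = 1) (he0 : e 0 = 1)
    (he : ∀ i, 1 ≤ i → i ≤ t → e i = -∑ j ∈ range i, e j * c (i - j)) {n : ℕ} (hn : n ≤ t) :
    ∑ j ∈ range (n + 1), e j * c (n - j) = if n = 0 then 1 else 0 := by
  rw [sum_range_succ, Nat.sub_self, hc0, mul_one]
  rcases Nat.eq_zero_or_pos n with rfl | hpos
  · simp [he0]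
  · rw [he n hpos hn, if_neg hpos.ne']
    ring

theorem sum_mul_pow_sub_eq_zero_of_root {c : ℕ → R} {k : ℕ} {v : R}
    (hroot : ∑ j ∈ range (k + 1), c j * v ^ (k - j) = 0) (hc : ∀ m, k < m → c m = 0)
    (i : ℕ) : ∑ j ∈ range (i + k + 1), c j * v ^ (i + k - j) = 0 := by
  calc ∑ j ∈ range (i + k + 1), c j * v ^ (i + k - j)
      = ∑ j ∈ range (k + 1), c j * v ^ (i + k - j) := by
        refine (sum_subset (range_subset_range.mpr (by omega)) fun j hj hjk => ?_).symm
        simp only [mem_range] at hj hjk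
        rw [hc j (by omega), zero_mul]
    _ = v ^ i * ∑ j ∈ range (k + 1), c j * v ^ (k - j) := by
        rw [mul_sum]
        refine sum_congr rfl fun j hj => ?_
        simp only [mem_range] at hj
        rw [show i + k - j = i + (k - j) by omega, pow_add]
        ring
    _ = 0 := by rw [hroot, mul_zero]

theorem sum_tail_eq_neg_sum_head_of_root {c : ℕ → R} {k : ℕ} {v : R}
    (hroot : ∑ j ∈ range (k + 1), c j * v ^ (k - j) = 0) (hc : ∀ m, k < m → c m = 0)
    (i : ℕ) :
    ∑ s ∈ range k, c (i + k - s) * v ^ s = -∑ j ∈ range (i + 1), c j * v ^ (i + k - j) := by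
  have h := sum_mul_pow_sub_eq_zero_of_root hroot hc i
  rw [← sum_range_reflect, show i + k + 1 = k + (i + 1) by omega, sum_range_add,
    ← sum_range_reflect _ (i + 1)] at h
  rw [eq_neg_iff_add_eq_zero, ← h]
  congr 1
  · refine sum_congr rfl fun s hs => ?_
    simp only [mem_range] at hs
    congr 2 <;> omega
  · refine sum_congr rfl fun j hj => ?_
    simp only [mem_range] at hj
    congr 2 <;> omega

theorem pow_add_eq_sum_of_root {c e : ℕ → R} {k t : ℕ} {v : R}
    (hroot : ∑ j ∈ range (k + 1), c j * v ^ (k - j) = 0) (hc : ∀ m, k < m → c m = 0)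
    (hconv : ∀ n ≤ t, ∑ j ∈ range (n + 1), e j * c (n - j) = if n = 0 then 1 else 0) :
    v ^ (k + t) = ∑ s ∈ range k, (-∑ i ∈ range (t + 1), c (i + k - s) * e (t - i)) * v ^ s := by
  calc v ^ (k + t)
      = ∑ n ∈ range (t + 1), (∑ j ∈ range (n + 1), e j * c (n - j)) * v ^ (k + t - n) := by
        rw [sum_congr rfl fun n hn => by rw [hconv n (Nat.lt_succ_iff.mp (mem_range.mp hn))]]
        simp
    _ = ∑ n ∈ range (t + 1), ∑ j ∈ range (n + 1),
          e j * (c (n - j) * v ^ (k + t - j - (n - j))) := by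
        refine sum_congr rfl fun n hn => ?_
        rw [sum_mul]
        refine sum_congr rfl fun j hj => ?_
        simp only [mem_range] at hn hj
        rw [show k + t - j - (n - j) = k + t - n by omega, mul_assoc]
    _ = ∑ i ∈ range (t + 1), e i * ∑ j ∈ range (t - i + 1), c j * v ^ (t - i + k - j) := by
        rw [sum_range_diag_flip (t + 1) fun i j => e i * (c j * v ^ (k + t - i - j))]
        refine sum_congr rfl fun i hi => ?_
        simp only [mem_range] at hi
        rw [mul_sum, show t + 1 - i = t - i + 1 by omega]
        refine sum_congr rfl fun j hj => ?_
        rw [show k + t - i - j = t - i + k - j by omega]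
    _ = ∑ i ∈ range (t + 1), e (t - i) * -∑ s ∈ range k, c (i + k - s) * v ^ s := by
        rw [← sum_range_reflect]
        refine sum_congr rfl fun i hi => ?_
        simp only [mem_range] at hi
        rw [sum_tail_eq_neg_sum_head_of_root hroot hc, neg_neg,
          show t + 1 - 1 - i = t - i by omega, show t - (t - i) = i by omega]
    _ = ∑ s ∈ range k, (-∑ i ∈ range (t + 1), c (i + k - s) * e (t - i)) * v ^ s := by
        simp only [mul_neg, sum_neg_distrib, neg_mul, mul_sum, sum_mul]
        rw [sum_comm]
        refine congrArg _ (sum_congr rfl fun s _ => sum_congr rfl fun i _ => by ring)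

end

open Polynomial in
theorem stmt_2_general {F : Type*} [Field F] (k t : ℕ) (a : Fin k → F)
    (c e f : ℕ → F)
    (hc : (∏ i : Fin k, (X - C (a i))) =
      ∑ j ∈ Finset.range (k + 1), Polynomial.C (c j) * X ^ (k - j))
    (hc' : ∀ m, k < m → c m = 0)
    (he0 : e 0 = 1)
    (he : ∀ i, 1 ≤ i → i ≤ t → e i = -∑ j ∈ Finset.range i, e j * c (i - j))
    (hf : ∀ s, s ≤ k - 1 → f s = -∑ i ∈ Finset.range (min t s + 1), c (i + k - s) * e (t - i)) :
    ∀ r : Fin k, a r ^ (k + t) = ∑ s ∈ Finset.range k, f s * a r ^ s := by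
  intro r
  have hc0 : c 0 = 1 :=
    (monic_prod_of_monic _ _ fun i _ => monic_X_sub_C (a i)).eq_one_of_eq_sum_C_mul_X_pow_sub
      (by simp) hc
  have hroot : ∑ j ∈ range (k + 1), c j * a r ^ (k - j) = 0 := by
    simpa [eval_prod, eval_finsetSum, prod_eq_zero (mem_univ r)] using
      (congrArg (eval (a r)) hc).symm
  rw [pow_add_eq_sum_of_root hroot hc' fun n hn => sum_mul_sub_eq_ite_of_recurrence hc0 he0 he hn]
  refine sum_congr rfl fun s hs => ?_
  simp only [mem_range] at hs
  rw [hf s (by omega), sum_subset (range_subset_range.mpr (Nat.succ_le_succ (min_le_left t s)))]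
  intro i hi hit
  simp only [mem_range] at hi hit
  rw [hc' _ (by omega), zero_mul]

open Polynomial in
/-- Lemma 4: with `∏_{i=1}^k (x - a_i) = ∑_{j=0}^k c_j x^{k-j}`, `e` the inverse
recurrence sequence and `f_{t,s} = -∑_{i=0}^{min(t,s)} c_{i+k-s} e_{t-i}`, one has
`a_r^{k+t} = ∑_{s=0}^{k-1} f_{t,s} a_r^s` for each `r`. -/
theorem stmt_2 {F : Type*} [Field F] (k t : ℕ) (a : Fin k → F)
    (ha : Function.Injective a) (c e f : ℕ → F)
    (hc : (∏ i : Fin k, (X - C (a i))) =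
      ∑ j ∈ Finset.range (k + 1), Polynomial.C (c j) * X ^ (k - j))
    (hc' : ∀ m, k < m → c m = 0)
    (he0 : e 0 = 1)
    (he : ∀ i, 1 ≤ i → i ≤ t → e i = -∑ j ∈ Finset.range i, e j * c (i - j))
    (hf : ∀ s, s ≤ k - 1 → f s = -∑ i ∈ Finset.range (min t s + 1), c (i + k - s) * e (t - i)) :
    ∀ r : Fin k, a r ^ (k + t) = ∑ s ∈ Finset.range k, f s * a r ^ s :=
  stmt_2_general k t a c e f hc hc' he0 he hf
end

section
/- Let $a_1,\ldots,a_n$ be distinct elements of a field $F$, $u_i = \prod_{j\neq i}(a_i-a_j)^{-1}$, and write $\prod_{i=1}^n(x-a_i) = \sum_{j=0}^n c_j x^{n-j}$. Define $e_0 = 1$ and $e_m = -\sum_{j=0}^{m-1} e_j c_{m-j}$ for $m \geq 1$. Then for every $0 \leq t \leq n-2$, $\sum_{i=1}^n u_i a_i^{n+t} = e_{t+1}$. -/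
/-!
Write `S k = ∑ u_i a_i^k`. Reading off the coefficient of `X^(n-1)` in the Lagrange interpolation
of `X^k` gives `S k = 0` for `k < n - 1` and `S (n-1) = 1`. Since every `a_i` is a root of
`∑ c_j X^(n-j)`, the sums also satisfy `∑_j c_j S (k + n - j) = 0`; the low sums vanish, so
`m ↦ S (n - 1 + m)` obeys the recurrence defining `e`, and starts at `1 = e 0`.
-/

open Polynomial Finset Lagrange

section

variable {R ι : Type*}

def weightedPowerSum [CommSemiring R] (s : Finset ι) (w v : ι → R) (k : ℕ) : R :=
  ∑ i ∈ s, w i * v i ^ k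

theorem weightedPowerSum_nodalWeight_of_lt {F : Type*} [Field F] [DecidableEq ι]
    {s : Finset ι} {v : ι → F} (hvs : Set.InjOn v s) {k : ℕ} (hk : k < #s) :
    weightedPowerSum s (nodalWeight s v) v k = if k = #s - 1 then 1 else 0 := by
  have hdeg : (X ^ k : F[X]).degree < #s := by rw [degree_X_pow]; exact_mod_cast hk
  calc weightedPowerSum s (nodalWeight s v) v k = (X ^ k : F[X]).coeff (#s - 1) := by
        rw [coeff_eq_sum hvs hdeg, weightedPowerSum]
        refine sum_congr rfl fun i _ => ?_
        rw [nodalWeight, prod_inv_distrib, eval_pow, eval_X, div_eq_mul_inv, mul_comm]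
    _ = if k = #s - 1 then 1 else 0 := by simp only [coeff_X_pow, eq_comm]

theorem sum_mul_weightedPowerSum_eq_zero [CommRing R] {s : Finset ι} {w v : ι → R}
    {c : ℕ → R} {n : ℕ} (hroot : ∀ i ∈ s, ∑ j ∈ range (n + 1), c j * v i ^ (n - j) = 0)
    (k : ℕ) : ∑ j ∈ range (n + 1), c j * weightedPowerSum s w v (k + (n - j)) = 0 := by
  simp only [weightedPowerSum, mul_sum, pow_add]
  rw [sum_comm]
  refine sum_eq_zero fun i hi => ?_
  calc ∑ j ∈ range (n + 1), c j * (w i * (v i ^ k * v i ^ (n - j)))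
      = w i * v i ^ k * ∑ j ∈ range (n + 1), c j * v i ^ (n - j) := by
        rw [mul_sum]; exact sum_congr rfl fun j _ => by ring
    _ = 0 := by rw [hroot i hi, mul_zero]

theorem weightedPowerSum_nodalWeight_recurrence {F : Type*} [Field F] [DecidableEq ι]
    {s : Finset ι} {v : ι → F} (hvs : Set.InjOn v s) {n : ℕ} (hn : #s = n) {c : ℕ → F}
    (hc0 : c 0 = 1) (hroot : ∀ i ∈ s, ∑ j ∈ range (n + 1), c j * v i ^ (n - j) = 0)
    {m : ℕ} (hm : 1 ≤ m) (hmn : m ≤ n) :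
    weightedPowerSum s (nodalWeight s v) v (n - 1 + m) =
      -∑ j ∈ range m, weightedPowerSum s (nodalWeight s v) v (n - 1 + j) * c (m - j) := by
  have hrel := sum_mul_weightedPowerSum_eq_zero (w := nodalWeight s v) hroot (m - 1)
  have hvanish : ∀ k < n - 1, weightedPowerSum s (nodalWeight s v) v k = 0 := fun k hk => by
    rw [weightedPowerSum_nodalWeight_of_lt hvs (by omega), if_neg (by omega)]
  set S := weightedPowerSum s (nodalWeight s v) v
  rw [← sum_range_add_sum_Ico _ (by omega : m + 1 ≤ n + 1)] at hrel
  -- for `j > m` the exponent `m - 1 + (n - j)` lies below `n - 1`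
  have hhigh : ∑ j ∈ Ico (m + 1) (n + 1), c j * S (m - 1 + (n - j)) = 0 :=
    sum_eq_zero fun j hj => by
      rw [mem_Ico] at hj
      rw [hvanish _ (by omega), mul_zero]
  have hlow : ∑ j ∈ range (m + 1), c j * S (m - 1 + (n - j)) =
      ∑ j ∈ range (m + 1), S (n - 1 + j) * c (m - j) := by
    rw [← sum_range_reflect]
    refine sum_congr rfl fun j hj => ?_
    rw [mem_range] at hj
    rw [Nat.add_sub_cancel, mul_comm, show m - 1 + (n - (m - j)) = n - 1 + j by omega]
  rw [hhigh, add_zero, hlow, sum_range_succ, Nat.sub_self, hc0, mul_one] at hrel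
  exact eq_neg_of_add_eq_zero_right hrel

theorem eq_of_inverse_recurrence [Ring R] {c f g : ℕ → R} {N : ℕ} (h0 : f 0 = g 0)
    (hf : ∀ m, 1 ≤ m → m ≤ N → f m = -∑ j ∈ range m, f j * c (m - j))
    (hg : ∀ m, 1 ≤ m → g m = -∑ j ∈ range m, g j * c (m - j)) :
    ∀ m ≤ N, f m = g m := by
  intro m
  induction m using Nat.strong_induction_on with
  | _ m ih =>
    intro hm
    rcases Nat.eq_zero_or_pos m with rfl | hpos
    · exact h0
    rw [hf m hpos hm, hg m hpos]
    exact congrArg Neg.neg <| sum_congr rfl fun j hj => by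
      rw [ih j (mem_range.mp hj) ((mem_range.mp hj).le.trans hm)]

theorem coeff_zero_eq_one_of_nodal_eq [CommRing R] [Nontrivial R] {s : Finset ι} {v : ι → R}
    {n : ℕ} (hn : #s = n) {c : ℕ → R}
    (hc : nodal s v = ∑ j ∈ range (n + 1), C (c j) * X ^ (n - j)) : c 0 = 1 := by
  have hlead := (nodal_monic (s := s) (v := v)).coeff_natDegree
  rw [natDegree_nodal, hn, hc, finsetSum_coeff] at hlead
  rwa [sum_eq_single 0 (fun j hj hj0 => by rw [coeff_C_mul_X_pow, if_neg (by grind)])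
    (by simp), coeff_C_mul_X_pow, if_pos (by simp)] at hlead

theorem sum_coeff_mul_pow_eq_zero_of_nodal_eq [CommRing R] {s : Finset ι} {v : ι → R}
    {c : ℕ → R} {n : ℕ} (hc : nodal s v = ∑ j ∈ range (n + 1), C (c j) * X ^ (n - j))
    {i : ι} (hi : i ∈ s) : ∑ j ∈ range (n + 1), c j * v i ^ (n - j) = 0 := by
  simpa [hc, eval_finsetSum] using eval_nodal_at_node (v := v) hi

end

open Polynomial in
/-- With `u_i = ∏_{j≠i}(a_i - a_j)⁻¹`, `∏ (x - a_i) = ∑_{j=0}^n c_j x^{n-j}` and `e`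
the inverse recurrence sequence, `∑ u_i a_i^{n+t} = e_{t+1}` for all `0 ≤ t ≤ n-2`. -/
theorem stmt_8 {F : Type*} [Field F] (n : ℕ)
    (a : Fin n → F) (ha : Function.Injective a)
    (u : Fin n → F)
    (hu : ∀ i, u i = (∏ j ∈ Finset.univ.erase i, (a i - a j))⁻¹)
    (c e : ℕ → F)
    (hc : (∏ i : Fin n, (X - C (a i))) =
      ∑ j ∈ Finset.range (n + 1), Polynomial.C (c j) * X ^ (n - j))
    (he0 : e 0 = 1)
    (he : ∀ m, 1 ≤ m → e m = -∑ j ∈ Finset.range m, e j * c (m - j)) :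
    ∀ t, t + 2 ≤ n → ∑ i : Fin n, u i * a i ^ (n + t) = e (t + 1) := by
  intro t ht
  have hcard : #(univ : Finset (Fin n)) = n := card_fin n
  have hu' : u = nodalWeight univ a := funext fun i => by rw [hu, nodalWeight, prod_inv_distrib]
  rw [← nodal_eq] at hc
  have hS0 : weightedPowerSum univ u a (n - 1 + 0) = e 0 := by
    rw [he0, hu', weightedPowerSum_nodalWeight_of_lt ha.injOn (by omega), if_pos (by omega)]
  have key := eq_of_inverse_recurrence (N := n) hS0
    (fun m hm hmn => hu' ▸ weightedPowerSum_nodalWeight_recurrence ha.injOn hcard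
      (coeff_zero_eq_one_of_nodal_eq hcard hc)
      (fun i hi => sum_coeff_mul_pow_eq_zero_of_nodal_eq hc hi) hm hmn)
    he (t + 1) (by omega)
  rwa [show n - 1 + (t + 1) = n + t by omega] at key
end

section
/- Let $a_1,\ldots,a_n$ be distinct elements of a field $F$, $u_i = \prod_{j\neq i}(a_i-a_j)^{-1}$. Let $V_n = (a_j^{i})_{0\leq i\leq n-1, 1\leq j\leq n}$ be the Vandermonde matrix and $U = \mathrm{diag}(u_1,\ldots,u_n)$. Then the Hankel matrix $V_n U V_n^{\mathrm{T}}$, whose $(i,j)$ entry is $\sum_{r=1}^n u_r a_r^{i+j}$ for $0 \leq i,j \leq n-1$, equals the matrix with $(i,j)$ entry $e_{i+j-(n-1)}$ when $i+j \geq n-1$ and $0$ otherwise, where $e_0 = 1$ and $e_m = -\sum_{s=0}^{m-1} e_s c_{m-s}$, with $c_j$ the coefficients of $\prod_{i=1}^n(x-a_i) = \sum_{j=0}^n c_j x^{n-j}$. -/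
/-!
Entry `(i, j)` of `V U Vᵀ` is the weighted power sum `S (i + j)`, `S k = ∑ r, u r * a r ^ k`.
For `k < n`, `S k` is the coefficient of `X ^ (n - 1)` in the Lagrange interpolant of `X ^ k`,
so `S` vanishes below `n - 1` and `S (n - 1) = 1`. Every `a r` is a root of
`∑ c j X ^ (n - j)`, so `S` satisfies the linear recurrence with coefficients `c`; because of
the vanishing, the shifted sequence `S (m + (n - 1))` satisfies, for `m < n`, the same recurrence
as `e` and has the same initial value.
-/

open Polynomial Finset

theorem sum_pow_div_prod_sub_eq_ite {F ι : Type*} [Field F] [Fintype ι] [DecidableEq ι]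
    {a : ι → F} (ha : Function.Injective a) {m : ℕ} (hm : m < Fintype.card ι) :
    ∑ i, a i ^ m / ∏ j ∈ univ.erase i, (a i - a j) =
      if m = Fintype.card ι - 1 then 1 else 0 := by
  have hdeg : (X ^ m : F[X]).degree < #(univ : Finset ι) := by
    rw [degree_X_pow, card_univ]; exact_mod_cast hm
  have h := Lagrange.coeff_eq_sum ha.injOn hdeg
  simp only [eval_pow, eval_X, coeff_X_pow, card_univ] at h
  rw [← h]
  exact if_congr eq_comm rfl rfl

theorem coeff_sum_C_mul_X_pow_sub_self {R : Type*} [Semiring R] (c : ℕ → R) (n : ℕ) :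
    (∑ j ∈ range (n + 1), C (c j) * X ^ (n - j)).coeff n = c 0 := by
  rw [finsetSum_coeff, sum_eq_single 0 (fun j hj hj0 => ?_) (by simp)]
  · simp
  · rw [coeff_C_mul_X_pow, if_neg (by simp at hj; omega)]

theorem sum_coeff_mul_sum_pow_eq_zero {R ι : Type*} [CommRing R] [Fintype ι] {n : ℕ}
    {c : ℕ → R} {x : ι → R} (hroot : ∀ r, ∑ j ∈ range (n + 1), c j * x r ^ (n - j) = 0)
    (w : ι → R) (k : ℕ) :
    ∑ j ∈ range (n + 1), c j * ∑ r, w r * x r ^ (k + n - j) = 0 :=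
  calc
    _ = ∑ r, w r * x r ^ k * ∑ j ∈ range (n + 1), c j * x r ^ (n - j) := by
      simp only [mul_sum]
      rw [sum_comm]
      refine sum_congr rfl fun r _ => sum_congr rfl fun j hj => ?_
      rw [Nat.add_sub_assoc (Nat.lt_succ_iff.1 (mem_range.1 hj)), pow_add]
      ring
    _ = 0 := by simp [hroot]

theorem eq_neg_sum_mul_of_sum_mul_eq_zero {R : Type*} [CommRing R] {n : ℕ} {c S : ℕ → R}
    (hc0 : c 0 = 1) (hlow : ∀ k < n - 1, S k = 0)
    (hrec : ∀ k, ∑ j ∈ range (n + 1), c j * S (k + n - j) = 0)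
    {m : ℕ} (hm : 1 ≤ m) (hmn : m ≤ n) :
    S (m + (n - 1)) = -∑ s ∈ range m, S (s + (n - 1)) * c (m - s) := by
  have htrunc : ∑ j ∈ range (m + 1), c j * S (m + (n - 1) - j) = 0 := by
    rw [← hrec (m - 1), show m - 1 + n = m + (n - 1) by omega]
    refine sum_subset (range_subset_range.2 (by omega)) fun j hj hjm => ?_
    rw [mem_range] at hj hjm
    rw [hlow _ (by omega), mul_zero]
  rw [← sum_range_reflect, sum_range_succ] at htrunc
  simp only [Nat.add_sub_cancel, Nat.sub_self, Nat.sub_zero, hc0, one_mul] at htrunc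
  rw [eq_neg_iff_add_eq_zero, ← htrunc, add_comm]
  congr 1
  refine sum_congr rfl fun s hs => ?_
  rw [mul_comm, show m + (n - 1) - (m - s) = s + (n - 1) by simp at hs; omega]

theorem eq_of_eq_neg_sum_mul {R : Type*} [Ring R] {c x y : ℕ → R} {N : ℕ}
    (hx : ∀ m, 1 ≤ m → m < N → x m = -∑ s ∈ range m, x s * c (m - s))
    (hy : ∀ m, 1 ≤ m → m < N → y m = -∑ s ∈ range m, y s * c (m - s))
    (h0 : x 0 = y 0) : ∀ m < N, x m = y m := by
  intro m
  induction m using Nat.strong_induction_on with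
  | _ m ih =>
    intro hm
    rcases Nat.eq_zero_or_pos m with rfl | hpos
    · exact h0
    rw [hx m hpos hm, hy m hpos hm]
    congr 1
    exact sum_congr rfl fun s hs => by rw [ih s (mem_range.1 hs) (by simp at hs; omega)]

open Polynomial in
/-- The Hankel matrix `V_n U V_nᵀ` with `(i,j)` entry `∑_r u_r a_r^{i+j}` equals the
anti-triangular matrix with entries `e_{i+j-(n-1)}` for `i+j ≥ n-1` and `0` otherwise. -/
theorem stmt_9 {F : Type*} [Field F] (n : ℕ)
    (a : Fin n → F) (ha : Function.Injective a)
    (u : Fin n → F)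
    (hu : ∀ i, u i = (∏ j ∈ Finset.univ.erase i, (a i - a j))⁻¹)
    (c e : ℕ → F)
    (hc : (∏ i : Fin n, (X - C (a i))) =
      ∑ j ∈ Finset.range (n + 1), Polynomial.C (c j) * X ^ (n - j))
    (he0 : e 0 = 1)
    (he : ∀ m, 1 ≤ m → e m = -∑ s ∈ Finset.range m, e s * c (m - s))
    (Vn : Matrix (Fin n) (Fin n) F)
    (hVn : ∀ i j, Vn i j = a j ^ (i : ℕ)) :
    Vn * Matrix.diagonal u * Vn.transpose =
      Matrix.of fun i j : Fin n =>
        if n - 1 ≤ (i : ℕ) + (j : ℕ) then e ((i : ℕ) + (j : ℕ) - (n - 1)) else 0 := by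
  set S : ℕ → F := fun k => ∑ r, u r * a r ^ k
  have hS_lt : ∀ k < n, S k = if k = n - 1 then 1 else 0 := fun k hk => by
    simpa [S, hu, div_eq_inv_mul] using sum_pow_div_prod_sub_eq_ite ha (m := k) (by simpa using hk)
  have hc0 : c 0 = 1 := by
    rw [← coeff_sum_C_mul_X_pow_sub_self c n, ← hc]
    simpa using (monic_prod_X_sub_C a univ).coeff_natDegree
  have hroot : ∀ r, ∑ j ∈ range (n + 1), c j * a r ^ (n - j) = 0 := fun r => by
    simpa [eval_prod, eval_finsetSum, Finset.prod_eq_zero (mem_univ r)] using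
      (congrArg (eval (a r)) hc).symm
  have hSe : ∀ m < n, S (m + (n - 1)) = e m := by
    intro m hm
    have hlow : ∀ k < n - 1, S k = 0 := fun k hk => by
      rw [hS_lt k (by omega), if_neg (by omega)]
    have h0 : S (0 + (n - 1)) = e 0 := by rw [zero_add, hS_lt _ (by omega), if_pos rfl, he0]
    exact eq_of_eq_neg_sum_mul (x := fun k => S (k + (n - 1)))
      (fun k hk hkn => eq_neg_sum_mul_of_sum_mul_eq_zero hc0 hlow
        (sum_coeff_mul_sum_pow_eq_zero hroot u) hk hkn.le)
      (fun k hk _ => he k hk) h0 m hm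
  ext i j
  have hentry : (Vn * Matrix.diagonal u * Vn.transpose) i j = S (i + j) := by
    rw [Matrix.mul_apply]
    simp only [Matrix.mul_diagonal, Matrix.transpose_apply, hVn, S, pow_add]
    exact sum_congr rfl fun r _ => by ring
  rw [hentry, Matrix.of_apply]
  split_ifs with h
  · rw [← hSe _ (by omega), Nat.sub_add_cancel h]
  · rw [hS_lt _ (by omega), if_neg (by omega)]
end

section
/- Let $a_1,\ldots,a_n$ be distinct elements of a field $F$, $1 \leq k \leq n$, and $B \in F^{k\times(n-k)}$. For a $k$-subset $\mathcal{T} = \{t_1,\ldots,t_k\} \subseteq \{1,\ldots,n\}$, let $F_{\mathcal{T}} \in F^{(n-k)\times k}$ be the matrix with entries $f_{t,s}$ ($0\leq t \leq n-k-1$, $0 \leq s \leq k-1$) defined uniquely by $a_{t_r}^{k+t} = \sum_{s=0}^{k-1} f_{t,s} a_{t_r}^{s}$ for all $r$. Let $G_{\mathcal{T}}$ be the $k\times k$ matrix with $(i,r)$ entry $a_{t_r}^i + \sum_{j=0}^{n-k-1} b_{i,j} a_{t_r}^{k+j}$. Then $\det(G_{\mathcal{T}}) = \det(I_k + B F_{\mathcal{T}})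 \cdot \prod_{1\leq r < s \leq k}(a_{t_s} - a_{t_r})$. -/
/-! With `V` the Vandermonde matrix of the points `a (T r)`, the defining relation of `F_𝒯` says
that the matrix of higher powers `a (T r) ^ (k + t)` is `F_𝒯 * Vᵀ`, so
`G_𝒯 = Vᵀ + B * (F_𝒯 * Vᵀ) = (1 + B * F_𝒯) * Vᵀ`, and the determinant factors. -/

open Matrix Finset

theorem det_vandermonde_transpose_add_mul {R : Type*} [CommRing R] {k : ℕ} {m : Type*}
    [Fintype m] (x : Fin k → R) (B : Matrix (Fin k) m R) (C : Matrix m (Fin k) R) :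
    ((vandermonde x)ᵀ + B * (C * (vandermonde x)ᵀ)).det =
      (1 + B * C).det * ∏ i, ∏ j ∈ Ioi i, (x j - x i) := by
  rw [← Matrix.mul_assoc, ← one_add_mul, det_mul, det_transpose, det_vandermonde]

theorem stmt_11_general {F : Type*} [Field F] (n k : ℕ)
    (a : Fin n → F)
    (b : Fin k → Fin (n - k) → F)
    (T : Fin k → Fin n)
    (FT : Matrix (Fin (n - k)) (Fin k) F)
    (hFT : ∀ (t : Fin (n - k)) (r : Fin k),
      a (T r) ^ (k + (t : ℕ)) = ∑ s : Fin k, FT t s * a (T r) ^ (s : ℕ))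
    (GT : Matrix (Fin k) (Fin k) F)
    (hGT : ∀ (i r : Fin k), GT i r =
      a (T r) ^ (i : ℕ) + ∑ j : Fin (n - k), b i j * a (T r) ^ (k + (j : ℕ))) :
    GT.det = (1 + Matrix.of b * FT).det *
      ∏ r : Fin k, ∏ s ∈ Finset.Ioi r, (a (T s) - a (T r)) := by
  set V := vandermonde (fun r => a (T r))
  have hFT_mul_V : FT * Vᵀ = of fun (t : Fin (n - k)) r => a (T r) ^ (k + (t : ℕ)) := by
    ext t r
    simp [V, mul_apply, hFT]
  have hGT_eq : GT = Vᵀ + of b * (FT * Vᵀ) := by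
    ext i r
    simp [V, hFT_mul_V, hGT, mul_apply]
  rw [hGT_eq, det_vandermonde_transpose_add_mul]

/-- Key determinant identity in Theorem 1:
`det(G_𝒯) = det(I_k + B F_𝒯) · ∏_{r < s} (a_{t_s} - a_{t_r})`. -/
theorem stmt_11 {F : Type*} [Field F] (n k : ℕ) (hk : 1 ≤ k) (hkn : k ≤ n)
    (a : Fin n → F) (ha : Function.Injective a)
    (b : Fin k → Fin (n - k) → F)
    (T : Fin k → Fin n) (hT : Function.Injective T)
    (FT : Matrix (Fin (n - k)) (Fin k) F)
    (hFT : ∀ (t : Fin (n - k)) (r : Fin k),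
      a (T r) ^ (k + (t : ℕ)) = ∑ s : Fin k, FT t s * a (T r) ^ (s : ℕ))
    (GT : Matrix (Fin k) (Fin k) F)
    (hGT : ∀ (i r : Fin k), GT i r =
      a (T r) ^ (i : ℕ) + ∑ j : Fin (n - k), b i j * a (T r) ^ (k + (j : ℕ))) :
    GT.det = (1 + Matrix.of b * FT).det *
      ∏ r : Fin k, ∏ s ∈ Finset.Ioi r, (a (T s) - a (T r)) :=
  stmt_11_general n k a b T FT hFT GT hGT
end

section
/- Let $a_1,\ldots,a_n$ be distinct elements of a field $F$, $v_1,\ldots,v_n \in F^*$, $1 \leq k < n$, and $B \in F^{k\times(n-k)}$. The $(\mathcal{L},\mathcal{P})$-TGRS code $\mathcal{C}(B)$ with generator matrix whose $(i,r)$ entry is $v_r(a_r^i + \sum_{j=0}^{n-k-1} b_{i,j} a_r^{k+j})$ is MDS if and only if for every $k$-subset $\mathcal{T} \subseteq \{1,\ldots,n\}$, $\det(I_k + B F_{\mathcal{T}}) \neq 0$, where $F_{\mathcal{T}} \in F^{(n-k)\times k}$ has entries $f_{t,s}$ determined by $a_{t_r}^{k+t} = \sum_{s=0}^{k-1} f_{t,s}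 a_{t_r}^{s}$ for $t_r \in \mathcal{T}$. -/
/-!
Evaluating the generators `g_i` at `k` distinct nodes `x_r` gives the matrix `(I + B F_T) Vᵀ`,
where `V` is the (invertible) Vandermonde matrix of the nodes. Hence `det (I + B F_T) ≠ 0` exactly
when no nonzero polynomial of the span of the `g_i` vanishes at all nodes of `T`, i.e. when every
nonzero `f` in the span has fewer than `k` zeros among the `a_r`. As the weight of the codeword
of `f` is `n` minus that number of zeros, this is the Singleton-type lower bound
`n - k + 1` on the weights. A codeword of weight exactly `n - k + 1` then comes from a nonzero `f`
in the `k`-dimensional span vanishing at `k - 1` prescribed nodes.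
-/

open Polynomial Finset Matrix Function

section

variable {F : Type*} [Field F]

section Hamming

variable {ι : Type*} [Fintype ι] [DecidableEq F]

theorem hammingNorm_mul_left_of_ne_zero {v : ι → F} (hv : ∀ i, v i ≠ 0) (w : ι → F) :
    hammingNorm (fun i => v i * w i) = hammingNorm w :=
  hammingNorm_comp (fun i c => v i * c) (fun i => mul_right_injective₀ (hv i)) fun _ => mul_zero _

theorem hammingNorm_add_card_filter_eq_zero (w : ι → F) :
    hammingNorm w + #{i | w i = 0} = Fintype.card ι := by
  rw [hammingNorm, add_comm, card_filter_add_card_filter_not, card_univ]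

end Hamming

theorem Finset.exists_injective_fin_forall_mem_iff {ι : Type*} {s : Finset ι} {k : ℕ} :
    (∃ T : Fin k → ι, Injective T ∧ ∀ r, T r ∈ s) ↔ k ≤ #s := by
  constructor
  · rintro ⟨T, hT, hTs⟩
    simpa using card_le_card_of_injOn (s := univ) T (fun r _ => hTs r) hT.injOn
  · intro h
    obtain ⟨e⟩ := Function.Embedding.nonempty_of_card_le (α := Fin k) (β := s) (by simpa using h)
    exact ⟨fun r => e r, Subtype.val_injective.comp e.injective, fun r => (e r).2⟩

theorem Polynomial.card_filter_eval_eq_zero_le_natDegree {ι : Type*} [Fintype ι] [DecidableEq F]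
    {a : ι → F} (ha : Injective a) {f : F[X]} (hf : f ≠ 0) :
    #{r | f.eval (a r) = 0} ≤ f.natDegree :=
  calc #{r | f.eval (a r) = 0}
      = #(({r | f.eval (a r) = 0} : Finset ι).image a) := (card_image_of_injective _ ha).symm
    _ ≤ #f.roots.toFinset := card_le_card fun x hx => by
        obtain ⟨r, hr, rfl⟩ := mem_image.mp hx
        simpa [hf] using (mem_filter.mp hr).2
    _ ≤ Multiset.card f.roots := Multiset.toFinset_card_le _
    _ ≤ f.natDegree := card_roots' f

theorem exists_sum_mul_pow_eq {k : ℕ} {x : Fin k → F} (hx : Injective x) (y : Fin k → F) :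
    ∃ c : Fin k → F, ∀ r, ∑ s, c s * x r ^ (s : ℕ) = y r := by
  obtain ⟨c, hc⟩ := mulVec_surjective_iff_isUnit.mpr
    (isUnit_iff_isUnit_det _ |>.mpr (det_vandermonde_ne_zero_iff.mpr hx).isUnit) y
  exact ⟨c, fun r => by simpa [mulVec, dotProduct, mul_comm] using congrFun hc r⟩

theorem det_eval_ne_zero_iff {ι : Type*} [Fintype ι] [DecidableEq ι] {p : ι → F[X]}
    (hp : LinearIndependent F p) (x : ι → F) :
    (of fun i r => (p i).eval (x r)).det ≠ 0 ↔
      ∀ f ∈ Submodule.span F (Set.range p), (∀ r, f.eval (x r) = 0) → f = 0 := by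
  have hvecMul : ∀ c : ι → F,
      c ᵥ* (of fun i r => (p i).eval (x r)) = fun r => (∑ i, c i • p i).eval (x r) := by
    intro c
    ext r
    simp [vecMul, dotProduct, eval_finsetSum]
  rw [Ne, ← exists_vecMul_eq_zero_iff]
  simp only [Submodule.mem_span_range_iff_exists_fun, hvecMul]
  constructor
  · rintro h _ ⟨c, rfl⟩ hc
    by_contra hne
    exact h ⟨c, fun h0 => hne (by simp [h0]), funext hc⟩
  · rintro h ⟨c, hc, hcp⟩
    exact hc (funext (Fintype.linearIndependent_iff.mp hp c (h _ ⟨c, rfl⟩ (congrFun hcp))))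

noncomputable def tgrsPoly {k m : ℕ} (b : Fin k → Fin m → F) (i : Fin k) : F[X] :=
  X ^ (i : ℕ) + ∑ j : Fin m, C (b i j) * X ^ (k + (j : ℕ))

section tgrsPoly

variable {k m : ℕ} (b : Fin k → Fin m → F)

theorem coeff_tgrsPoly (i i' : Fin k) :
    (tgrsPoly b i).coeff i' = if i = i' then 1 else 0 := by
  have hne : ∀ j : Fin m, (i' : ℕ) ≠ k + j := fun j => by omega
  simp [tgrsPoly, coeff_X_pow, finsetSum_coeff, coeff_C_mul, hne, Fin.val_eq_val, eq_comm]

theorem linearIndependent_tgrsPoly : LinearIndependent F (tgrsPoly b) := by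
  refine Fintype.linearIndependent_iff.mpr fun c hc i => ?_
  simpa [finsetSum_coeff, coeff_tgrsPoly] using congrArg (coeff · i) hc

theorem span_tgrsPoly_le_degreeLT :
    Submodule.span F (Set.range (tgrsPoly b)) ≤ degreeLT F (k + m) := by
  have hmon : ∀ e < k + m, (X ^ e : F[X]) ∈ degreeLT F (k + m) := fun e he => by
    rw [mem_degreeLT, degree_X_pow]
    exact_mod_cast he
  refine Submodule.span_le.mpr (Set.range_subset_iff.mpr fun i => ?_)
  refine add_mem (hmon _ (by omega)) (sum_mem fun j _ => ?_)
  rw [← smul_eq_C_mul]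
  exact Submodule.smul_mem _ _ (hmon _ (by omega))

theorem eval_tgrsPoly_eq_mul_vandermonde {x : Fin k → F} {FT : Matrix (Fin m) (Fin k) F}
    (hFT : ∀ (t : Fin m) (r : Fin k), x r ^ (k + (t : ℕ)) = ∑ s, FT t s * x r ^ (s : ℕ)) :
    of (fun i r => (tgrsPoly b i).eval (x r)) = (1 + of b * FT) * (vandermonde x)ᵀ := by
  have hFT' : FT * (vandermonde x)ᵀ = of fun (t : Fin m) r => x r ^ (k + (t : ℕ)) := by
    ext t r
    simp [mul_apply, hFT]
  rw [add_mul, one_mul, Matrix.mul_assoc, hFT']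
  ext i r
  simp [mul_apply, tgrsPoly, eval_finsetSum]

theorem det_one_add_mul_ne_zero_iff {x : Fin k → F} (hx : Injective x)
    {FT : Matrix (Fin m) (Fin k) F}
    (hFT : ∀ (t : Fin m) (r : Fin k), x r ^ (k + (t : ℕ)) = ∑ s, FT t s * x r ^ (s : ℕ)) :
    (1 + of b * FT).det ≠ 0 ↔
      ∀ f ∈ Submodule.span F (Set.range (tgrsPoly b)), (∀ r, f.eval (x r) = 0) → f = 0 := by
  rw [← det_eval_ne_zero_iff (linearIndependent_tgrsPoly b), eval_tgrsPoly_eq_mul_vandermonde b hFT,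
    det_mul, det_transpose]
  exact (mul_ne_zero_iff_right (det_vandermonde_ne_zero_iff.mpr hx)).symm

end tgrsPoly

theorem exists_pow_add_eq_sum {k m : ℕ} {x : Fin k → F} (hx : Injective x) :
    ∃ FT : Matrix (Fin m) (Fin k) F,
      ∀ (t : Fin m) (r : Fin k), x r ^ (k + (t : ℕ)) = ∑ s, FT t s * x r ^ (s : ℕ) := by
  choose FT hFT using fun t : Fin m => exists_sum_mul_pow_eq hx fun r => x r ^ (k + (t : ℕ))
  exact ⟨of FT, fun t r => (hFT t r).symm⟩

section Code

variable [DecidableEq F] {n : ℕ} {a : Fin n → F}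

theorem forall_det_one_add_mul_ne_zero_iff {k m : ℕ} (b : Fin k → Fin m → F) (ha : Injective a) :
    (∀ T : Fin k → Fin n, Injective T → ∀ FT : Matrix (Fin m) (Fin k) F,
        (∀ (t : Fin m) (r : Fin k),
          a (T r) ^ (k + (t : ℕ)) = ∑ s : Fin k, FT t s * a (T r) ^ (s : ℕ)) →
        (1 + of b * FT).det ≠ 0) ↔
      ∀ f ∈ Submodule.span F (Set.range (tgrsPoly b)), f ≠ 0 → #{r | f.eval (a r) = 0} < k := by
  constructor
  · intro h f hf hf0
    by_contra! hle
    obtain ⟨T, hT, hTzero⟩ := exists_injective_fin_forall_mem_iff.mpr hle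
    obtain ⟨FT, hFT⟩ := exists_pow_add_eq_sum (m := m) (ha.comp hT)
    exact hf0 ((det_one_add_mul_ne_zero_iff b (ha.comp hT) hFT).mp (h T hT FT hFT) f hf
      fun r => (mem_filter.mp (hTzero r)).2)
  · intro h T hT FT hFT
    refine (det_one_add_mul_ne_zero_iff b (ha.comp hT) hFT).mpr fun f hf hzero => ?_
    by_contra hf0
    exact (h f hf hf0).not_ge
      (exists_injective_fin_forall_mem_iff.mp ⟨T, hT, fun r => by simpa using hzero r⟩)

variable {v : Fin n → F}

theorem forall_hammingNorm_ge_iff {k : ℕ} (ha : Injective a) (hv : ∀ r, v r ≠ 0)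
    {W : Submodule F F[X]} (hW : W ≤ degreeLT F n) :
    (∀ w ∈ {w | ∃ f ∈ W, w = fun r => v r * f.eval (a r)}, w ≠ 0 → n - k + 1 ≤ hammingNorm w) ↔
      ∀ f ∈ W, f ≠ 0 → #{r | f.eval (a r) = 0} < k := by
  have hweight : ∀ f : F[X],
      hammingNorm (fun r => v r * f.eval (a r)) + #{r | f.eval (a r) = 0} = n := fun f => by
    rw [hammingNorm_mul_left_of_ne_zero hv, hammingNorm_add_card_filter_eq_zero, Fintype.card_fin]
  have hzeros : ∀ f ∈ W, f ≠ 0 → #{r | f.eval (a r) = 0} < n := fun f hf hf0 =>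
    (card_filter_eval_eq_zero_le_natDegree ha hf0).trans_lt
      ((natDegree_lt_iff_degree_lt hf0).mpr (mem_degreeLT.mp (hW hf)))
  constructor
  · intro h f hf hf0
    have := hweight f
    have := hzeros f hf hf0
    have := h _ ⟨f, hf, rfl⟩ (hammingNorm_ne_zero_iff.mp (by omega))
    omega
  · rintro h _ ⟨f, hf, rfl⟩ hw
    have hf0 : f ≠ 0 := by
      rintro rfl
      exact hw (funext fun r => by simp)
    have := hweight f
    have := h f hf hf0
    have := hzeros f hf hf0
    omega

theorem exists_hammingNorm_eq_of_forall_card_lt {k : ℕ} (hv : ∀ r, v r ≠ 0)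
    {W : Submodule F F[X]} (hk : 1 ≤ k) (hkn : k ≤ n) (hW : k ≤ Module.finrank F W)
    (h : ∀ f ∈ W, f ≠ 0 → #{r | f.eval (a r) = 0} < k) :
    ∃ f ∈ W, hammingNorm (fun r => v r * f.eval (a r)) = n - k + 1 := by
  have := Module.finite_of_finrank_pos (by omega : 0 < Module.finrank F W)
  let nodes : Fin (k - 1) → Fin n := Fin.castLE (by omega)
  let evalNodes : W →ₗ[F] (Fin (k - 1) → F) :=
    (LinearMap.pi fun r => leval (a (nodes r))) ∘ₗ W.subtype
  obtain ⟨⟨f, hf⟩, hker, hne⟩ :=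
    (Submodule.ne_bot_iff _).mp (evalNodes.ker_ne_bot_of_finrank_lt (by rw [Module.finrank_fin_fun]; omega))
  have hf0 : f ≠ 0 := by simpa using hne
  have hzeros : k - 1 ≤ #{r | f.eval (a r) = 0} :=
    exists_injective_fin_forall_mem_iff.mp
      ⟨nodes, Fin.castLE_injective _, fun r => by simpa [evalNodes] using congrFun hker r⟩
  refine ⟨f, hf, ?_⟩
  have hweight := hammingNorm_add_card_filter_eq_zero fun r => f.eval (a r)
  rw [Fintype.card_fin] at hweight
  have := h f hf hf0
  rw [hammingNorm_mul_left_of_ne_zero hv]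
  omega

end Code

end

open Polynomial in
theorem stmt_12_general {F : Type*} [Field F] [DecidableEq F]
    (n k : ℕ) (hk : 1 ≤ k) (hkn : k < n)
    (a : Fin n → F) (ha : Function.Injective a)
    (v : Fin n → F) (hv : ∀ i, v i ≠ 0)
    (b : Fin k → Fin (n - k) → F)
    (g : Fin k → Polynomial F)
    (hg : ∀ i, g i = X ^ (i : ℕ) + ∑ j : Fin (n - k), C (b i j) * X ^ (k + (j : ℕ)))
    (Code : Set (Fin n → F))
    (hCode : Code =
      {w | ∃ f ∈ Submodule.span F (Set.range g), w = fun r => v r * f.eval (a r)}) :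
    ((∀ w ∈ Code, w ≠ 0 → n - k + 1 ≤ hammingNorm w) ∧
        ∃ w ∈ Code, w ≠ 0 ∧ hammingNorm w = n - k + 1) ↔
      ∀ T : Fin k → Fin n, Function.Injective T →
        ∀ FT : Matrix (Fin (n - k)) (Fin k) F,
          (∀ (t : Fin (n - k)) (r : Fin k),
            a (T r) ^ (k + (t : ℕ)) = ∑ s : Fin k, FT t s * a (T r) ^ (s : ℕ)) →
          (1 + Matrix.of b * FT).det ≠ 0 := by
  obtain rfl : g = tgrsPoly b := funext hg
  subst hCode
  have hdeg : Submodule.span F (Set.range (tgrsPoly b)) ≤ degreeLT F n := by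
    simpa only [Nat.add_sub_cancel' hkn.le] using span_tgrsPoly_le_degreeLT b
  have hdim : k ≤ Module.finrank F (Submodule.span F (Set.range (tgrsPoly b))) := by
    rw [finrank_span_eq_card (linearIndependent_tgrsPoly b), Fintype.card_fin]
  have hbound := forall_hammingNorm_ge_iff (k := k) ha hv hdeg
  rw [forall_det_one_add_mul_ne_zero_iff b ha, ← hbound]
  refine ⟨And.left, fun hmin => ⟨hmin, ?_⟩⟩
  obtain ⟨f, hf, hw⟩ :=
    exists_hammingNorm_eq_of_forall_card_lt hv hk hkn.le hdim (hbound.mp hmin)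
  exact ⟨_, ⟨f, hf, rfl⟩, hammingNorm_ne_zero_iff.mp (by omega), hw⟩

open Polynomial in
/-- Theorem 1: the `(𝓛,𝓟)`-TGRS code is MDS iff `det(I_k + B F_𝒯) ≠ 0` for every
`k`-subset `𝒯` of coordinates, where `F_𝒯` is determined by
`a_{t_r}^{k+t} = ∑_s f_{t,s} a_{t_r}^s`. -/
theorem stmt_12 {F : Type*} [Field F] [Fintype F] [DecidableEq F]
    (n k : ℕ) (hk : 1 ≤ k) (hkn : k < n)
    (a : Fin n → F) (ha : Function.Injective a)
    (v : Fin n → F) (hv : ∀ i, v i ≠ 0)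
    (b : Fin k → Fin (n - k) → F)
    (g : Fin k → Polynomial F)
    (hg : ∀ i, g i = X ^ (i : ℕ) + ∑ j : Fin (n - k), C (b i j) * X ^ (k + (j : ℕ)))
    (Code : Set (Fin n → F))
    (hCode : Code =
      {w | ∃ f ∈ Submodule.span F (Set.range g), w = fun r => v r * f.eval (a r)}) :
    ((∀ w ∈ Code, w ≠ 0 → n - k + 1 ≤ hammingNorm w) ∧
        ∃ w ∈ Code, w ≠ 0 ∧ hammingNorm w = n - k + 1) ↔
      ∀ T : Fin k → Fin n, Function.Injective T →
        ∀ FT : Matrix (Fin (n - k)) (Fin k) F,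
          (∀ (t : Fin (n - k)) (r : Fin k),
            a (T r) ^ (k + (t : ℕ)) = ∑ s : Fin k, FT t s * a (T r) ^ (s : ℕ)) →
          (1 + Matrix.of b * FT).det ≠ 0 :=
  stmt_12_general n k hk hkn a ha v hv b g hg Code hCode
end

section
/- Let $a_1,\ldots,a_n$ be distinct elements of a field $F$, $v_i \in F^*$, $u_i = \prod_{j\neq i}(a_i-a_j)^{-1}$, $\prod_{i=1}^n(x-a_i) = \sum_{j=0}^n c_j x^{n-j}$, and $B \in F^{k\times(n-k)}$. Let $G = [I_k \mid B] V_n V_0$ where $V_n$ is the $n\times n$ Vandermonde matrix $(a_j^i)_{0\leq i\leq n-1}$ and $V_0 = \mathrm{diag}(v_1,\ldots,v_n)$, and let $H = [-J_{n-k}B^{\mathrm{T}} \mid J_{n-k}]\, C\, V_n\, U$ where $J_{n-k}$ is the $(n-k)\times(n-k)$ anti-diagonal permutation matrix, $C$ is the $n\times n$ Hankel matrix with $(i,j)$ entry $c_{n-1-i-j}$ if $i+j \leq n-1$ and $0$ otherwise, and $U = \mathrm{diag}(u_1/v_1,\ldots,u_n/v_n)$. Then $G H^{\mathrm{T}} =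 0$ and $\mathrm{rank}(H) = n-k$; hence $H$ is a parity check matrix of the TGRS code generated by $G$. -/
/-!
Put `f = ∏ (X - a_i)`. By synthetic division, column `m` of `C V_n` is the coefficient vector
of `f / (X - a_m)`, and `u_m · f / (X - a_m)` is the Lagrange basis polynomial at `a_m`.
Interpolating `X^j` at the nodes therefore gives `C V_n diag(u) V_nᵀ = 1`. Since
`V_0 · diag(u / v) = diag(u)`, the product `G Hᵀ` collapses to
`[I | B] [-J Bᵀ | J]ᵀ = -B Jᵀ + B Jᵀ = 0`, and since `C V_n` and `diag(u / v)` are invertible,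
`rank H = rank [-J Bᵀ | J] = n - k`, the block `J` being a permutation matrix.
-/

open Polynomial Matrix Finset Lagrange

section Hankel

variable {R : Type*} [CommRing R]

/-- For `p = ∑ c_j X^(n-j)` of degree `n`, this is the paper's Hankel matrix `(c_{n-1-i-j})`. -/
def coeffHankel (p : R[X]) (n : ℕ) : Matrix (Fin n) (Fin n) R :=
  of fun i j => p.coeff (i + j + 1)

theorem coeffHankel_mul_vandermonde_transpose_apply {n : ℕ} {p : R[X]} (hp : p.natDegree ≤ n)
    (a : Fin n → R) (i m : Fin n) :
    (coeffHankel p n * (vandermonde a)ᵀ) i m = (p /ₘ (X - C (a m))).coeff i := by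
  have hzero : ∀ t ∈ Icc (i + 1 : ℕ) (i + n), t ∉ Icc (i + 1 : ℕ) p.natDegree →
      a m ^ (t - (i + 1)) * p.coeff t = 0 := fun t ht hnot => by
    rw [coeff_eq_zero_of_natDegree_lt (by simp_all), mul_zero]
  rw [coeff_divByMonic_X_sub_C, sum_subset (Icc_subset_Icc_right (by omega)) hzero,
    ← Ico_add_one_right_eq_Icc, sum_Ico_eq_sum_range, mul_apply]
  simp only [coeffHankel, of_apply, transpose_apply, vandermonde_apply]
  rw [Fin.sum_univ_eq_sum_range (fun j => p.coeff (i + j + 1) * a m ^ j)]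
  refine sum_congr (by congr 1; omega) fun j _ => ?_
  rw [mul_comm, Nat.add_sub_cancel_left, add_right_comm]

theorem coeff_eq_of_eq_sum_C_mul_X_pow_sub {p : R[X]} {N : ℕ} {c : ℕ → R}
    (hp : p = ∑ j ∈ range (N + 1), C (c j) * X ^ (N - j)) (t : ℕ) :
    p.coeff t = if t ≤ N then c (N - t) else 0 := by
  simp only [hp, finsetSum_coeff, coeff_C_mul_X_pow]
  split_ifs with ht
  · rw [sum_eq_single_of_mem (N - t) (mem_range.mpr (by omega)), if_pos (by omega)]
    intro j hj hne
    have := mem_range.mp hj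
    exact if_neg (by omega)
  · exact sum_eq_zero fun j _ => if_neg (by omega)

theorem coeffHankel_eq_of_eq_sum_C_mul_X_pow_sub {p : R[X]} {n : ℕ} {c : ℕ → R}
    (hp : p = ∑ j ∈ range (n + 1), C (c j) * X ^ (n - j)) :
    coeffHankel p n =
      of fun i j : Fin n => if (i : ℕ) + j ≤ n - 1 then c (n - 1 - i - j) else 0 := by
  ext i j
  have := i.isLt
  rw [coeffHankel, of_apply, of_apply, coeff_eq_of_eq_sum_C_mul_X_pow_sub hp]
  exact if_congr (by omega) (by congr 1; omega) rfl

end Hankel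

section Lagrange

variable {F : Type*} [Field F] {n : ℕ} {a : Fin n → F}

theorem coeff_basis_mul_vandermonde (ha : Function.Injective a) :
    of (fun i m : Fin n => (Lagrange.basis univ a m).coeff i) * vandermonde a = 1 := by
  ext i j
  have hX := eq_interpolate (f := (X : F[X]) ^ (j : ℕ)) (s := univ) (v := a) ha.injOn
    (by simp)
  rw [interpolate_apply] at hX
  have hcoeff := congrArg (coeff · (i : ℕ)) hX
  simp only [coeff_X_pow, finsetSum_coeff, coeff_C_mul, eval_pow, eval_X] at hcoeff
  simp only [mul_apply, one_apply, of_apply, vandermonde_apply, Fin.ext_iff, hcoeff, mul_comm]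

theorem coeffHankel_nodal_mul_vandermonde (ha : Function.Injective a) :
    coeffHankel (nodal univ a) n * (vandermonde a)ᵀ * diagonal (nodalWeight univ a) *
      vandermonde a = 1 := by
  classical
  convert coeff_basis_mul_vandermonde ha using 2
  ext i m
  rw [mul_diagonal, coeffHankel_mul_vandermonde_transpose_apply (by simp),
    of_apply, basis_eq_prod_sub_inv_mul_nodal_div (mem_univ m), coeff_C_mul,
    divByMonic_eq_div _ (monic_X_sub_C _), mul_comm]

end Lagrange

section ParityCheck

variable {m n : Type*} [Fintype m] [Fintype n]

theorem fromCols_one_mul_transpose_fromCols_neg {R : Type*} [CommRing R] [DecidableEq m]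
    (B : Matrix m n R) (J : Matrix n n R) :
    fromCols (1 : Matrix m m R) B * (fromCols (-(J * Bᵀ)) J)ᵀ = 0 := by
  rw [transpose_fromCols, fromCols_mul_fromRows]
  simp [transpose_mul]

theorem rank_fromCols_of_isUnit_det {F : Type*} [Field F] [DecidableEq m] (X : Matrix m n F)
    {J : Matrix m m F} (hJ : IsUnit J.det) : (fromCols X J).rank = Fintype.card m := by
  refine le_antisymm (rank_le_card_height _) ?_
  have h : fromCols X J * fromRows (0 : Matrix n m F) J⁻¹ = 1 := by
    rw [fromCols_mul_fromRows, Matrix.mul_zero, zero_add, mul_nonsing_inv _ hJ]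
  calc Fintype.card m = (1 : Matrix m m F).rank := (rank_one ..).symm
    _ ≤ (fromCols X J).rank := h ▸ rank_mul_le_left _ _

end ParityCheck

section Permutation

variable {R : Type*} [CommRing R]

theorem isUnit_det_permMatrix {m : Type*} [Fintype m] [DecidableEq m] {σ : Equiv.Perm m} :
    IsUnit (σ.permMatrix R).det := by
  rw [det_permutation]
  exact (Equiv.Perm.sign σ).isUnit.map (Int.castRingHom R)

theorem antidiagonal_eq_permMatrix_revPerm (m : ℕ) :
    (of fun i j : Fin m => if (i : ℕ) + j = m - 1 then (1 : R) else 0) =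
      (Fin.revPerm : Equiv.Perm (Fin m)).permMatrix R := by
  ext i j
  rw [of_apply, Equiv.Perm.permMatrix, PEquiv.toMatrix_apply]
  simp only [Equiv.toPEquiv_apply, Option.mem_def, Option.some.injEq, Fin.revPerm_apply,
    Fin.ext_iff, Fin.val_rev]
  exact if_congr (by omega) rfl rfl

end Permutation

open Polynomial Matrix in
theorem stmt_14_general {F : Type*} [Field F] (n k : ℕ)
    (a : Fin n → F) (ha : Function.Injective a)
    (v : Fin n → F) (hv : ∀ i, v i ≠ 0)
    (u : Fin n → F)
    (hu : ∀ i, u i = (∏ j ∈ Finset.univ.erase i, (a i - a j))⁻¹)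
    (c : ℕ → F)
    (hc : (∏ i : Fin n, (X - Polynomial.C (a i))) =
      ∑ j ∈ Finset.range (n + 1), Polynomial.C (c j) * X ^ (n - j))
    (b : Fin k → Fin (n - k) → F)
    (eqv : Fin k ⊕ Fin (n - k) ≃ Fin n)
    (Vn : Matrix (Fin n) (Fin n) F) (hVn : ∀ i j, Vn i j = a j ^ (i : ℕ))
    (J : Matrix (Fin (n - k)) (Fin (n - k)) F)
    (hJ : ∀ i j, J i j = if (i : ℕ) + (j : ℕ) = n - k - 1 then 1 else 0)
    (Cm : Matrix (Fin n) (Fin n) F)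
    (hCm : ∀ i j, Cm i j =
      if (i : ℕ) + (j : ℕ) ≤ n - 1 then c (n - 1 - (i : ℕ) - (j : ℕ)) else 0)
    (G : Matrix (Fin k) (Fin n) F)
    (hG : G = (Matrix.fromCols (1 : Matrix (Fin k) (Fin k) F) (Matrix.of b)).submatrix
        id eqv.symm * Vn * Matrix.diagonal v)
    (H : Matrix (Fin (n - k)) (Fin n) F)
    (hH : H = (Matrix.fromCols (-(J * (Matrix.of b)ᵀ)) J).submatrix id eqv.symm *
        Cm * Vn * Matrix.diagonal (fun i => u i / v i)) :
    G * Hᵀ = 0 ∧ H.rank = n - k := by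
  have hVn' : Vn = (vandermonde a)ᵀ := ext hVn
  have hu' : u = nodalWeight univ a := funext fun i => by rw [hu, nodalWeight, prod_inv_distrib]
  have hCm' : Cm = coeffHankel (nodal univ a) n := by
    rw [coeffHankel_eq_of_eq_sum_C_mul_X_pow_sub (p := nodal univ a) hc]; exact ext hCm
  have hinv : Cm * Vn * diagonal u * Vnᵀ = 1 := by
    rw [hVn', hCm', hu', transpose_transpose]; exact coeffHankel_nodal_mul_vandermonde ha
  have hinvT : Vn * diagonal u * Vnᵀ * Cmᵀ = 1 := by
    simpa [transpose_mul, Matrix.mul_assoc] using congrArg transpose hinv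
  have hvu : diagonal v * diagonal (fun i => u i / v i) = diagonal u := by
    rw [diagonal_mul_diagonal]; congr 1; funext i; exact mul_div_cancel₀ _ (hv i)
  set A := (fromCols (1 : Matrix (Fin k) (Fin k) F) (of b)).submatrix id eqv.symm
  set P := (fromCols (-(J * (of b)ᵀ)) J).submatrix id eqv.symm
  constructor
  · calc G * Hᵀ = A * (Vn * (diagonal v * diagonal fun i => u i / v i) * Vnᵀ * Cmᵀ) * Pᵀ := by
          rw [hG, hH]; simp only [transpose_mul, diagonal_transpose, Matrix.mul_assoc]
      _ = A * Pᵀ := by rw [hvu, hinvT, Matrix.mul_one]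
      _ = 0 := by
          rw [transpose_submatrix, submatrix_mul_equiv, submatrix_id_id,
            fromCols_one_mul_transpose_fromCols_neg]
  · have hCmVn : IsUnit (Cm * Vn).det :=
      isUnit_det_of_right_inverse (by rwa [Matrix.mul_assoc] at hinv)
    have hdiag : IsUnit (diagonal fun i => u i / v i).det := by
      rw [det_diagonal, isUnit_iff_ne_zero, prod_ne_zero_iff]
      exact fun i _ => div_ne_zero (hu' ▸ nodalWeight_ne_zero ha.injOn (mem_univ i)) (hv i)
    have hJ' : J = (Fin.revPerm : Equiv.Perm (Fin (n - k))).permMatrix F := by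
      rw [← antidiagonal_eq_permMatrix_revPerm]; exact ext hJ
    rw [hH, rank_mul_eq_left_of_isUnit_det _ _ hdiag, Matrix.mul_assoc,
      rank_mul_eq_left_of_isUnit_det _ _ hCmVn, show P.rank = _ from rank_submatrix _ (Equiv.refl _) eqv.symm,
      rank_fromCols_of_isUnit_det _ (hJ' ▸ isUnit_det_permMatrix), Fintype.card_fin]

open Polynomial Matrix in
/-- Theorem 3: with `G = [I_k | B] V_n V_0` and
`H = [-J_{n-k} Bᵀ | J_{n-k}] C V_n U`, one has `G Hᵀ = 0` and `rank H = n - k`,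
so `H` is a parity check matrix of the TGRS code generated by `G`. -/
theorem stmt_14 {F : Type*} [Field F] (n k : ℕ) (hk : 1 ≤ k) (hkn : k < n)
    (a : Fin n → F) (ha : Function.Injective a)
    (v : Fin n → F) (hv : ∀ i, v i ≠ 0)
    (u : Fin n → F)
    (hu : ∀ i, u i = (∏ j ∈ Finset.univ.erase i, (a i - a j))⁻¹)
    (c : ℕ → F)
    (hc : (∏ i : Fin n, (X - Polynomial.C (a i))) =
      ∑ j ∈ Finset.range (n + 1), Polynomial.C (c j) * X ^ (n - j))
    (b : Fin k → Fin (n - k) → F)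
    (eqv : Fin k ⊕ Fin (n - k) ≃ Fin n)
    (heqv : eqv = finSumFinEquiv.trans (finCongr (Nat.add_sub_cancel' hkn.le)))
    (Vn : Matrix (Fin n) (Fin n) F) (hVn : ∀ i j, Vn i j = a j ^ (i : ℕ))
    (J : Matrix (Fin (n - k)) (Fin (n - k)) F)
    (hJ : ∀ i j, J i j = if (i : ℕ) + (j : ℕ) = n - k - 1 then 1 else 0)
    (Cm : Matrix (Fin n) (Fin n) F)
    (hCm : ∀ i j, Cm i j =
      if (i : ℕ) + (j : ℕ) ≤ n - 1 then c (n - 1 - (i : ℕ) - (j : ℕ)) else 0)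
    (G : Matrix (Fin k) (Fin n) F)
    (hG : G = (Matrix.fromCols (1 : Matrix (Fin k) (Fin k) F) (Matrix.of b)).submatrix
        id eqv.symm * Vn * Matrix.diagonal v)
    (H : Matrix (Fin (n - k)) (Fin n) F)
    (hH : H = (Matrix.fromCols (-(J * (Matrix.of b)ᵀ)) J).submatrix id eqv.symm *
        Cm * Vn * Matrix.diagonal (fun i => u i / v i)) :
    G * Hᵀ = 0 ∧ H.rank = n - k :=
  stmt_14_general n k a ha v hv u hu c hc b eqv Vn hVn J hJ Cm hCm G hG H hH
end

section
/- Let $\Delta \subseteq F[x]$ be an $F$-subspace, $a_1,\ldots,a_n$ distinct in $F$, $v_i \in F^*$, and let $\mathcal{C} = \{(v_1 f(a_1),\ldots,v_n f(a_n)) : f \in \Delta\}$. Then the Schur square $\mathcal{C}^2 := \mathrm{span}_F\{c \star c' : c, c' \in \mathcal{C}\}$ (with $\star$ the componentwise product) satisfies $\mathcal{C}^2 = \{(v_1^2 g(a_1),\ldots,v_n^2 g(a_n)) : g \in \mathrm{span}_F\{fh : f,h \in \Delta\}\}$, and $\dim_F(\mathcal{C}^2) \geq |\{\deg(fh) : f,h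 \in \Delta,\ \deg(fh) < n\}|$. -/
open Polynomial in
private lemma aux_distinct_deg {F : Type*} [Field F] (s : Finset ℕ) (p : ℕ → Polynomial F)
    (hp0 : ∀ i ∈ s, p i ≠ 0) (hdeg : ∀ i ∈ s, (p i).natDegree = i) (c : ℕ → F)
    (h : ∑ i ∈ s, c i • p i = 0) : ∀ i ∈ s, c i = 0 := by
  induction s using Finset.strongInduction with
  | _ s ih =>
    rcases s.eq_empty_or_nonempty with rfl | hne
    · simp
    set m := s.max' hne with hm
    have hms : m ∈ s := s.max'_mem hne
    have hcm : c m = 0 := by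
      have hcoeff : (∑ i ∈ s, c i • p i).coeff m = c m * (p m).coeff m := by
        rw [Polynomial.finset_sum_coeff]
        rw [Finset.sum_eq_single m]
        · simp
        · intro i hi hine
          have hilt : i < m := lt_of_le_of_ne (s.le_max' i hi) hine
          have : (p i).coeff m = 0 := by
            apply Polynomial.coeff_eq_zero_of_natDegree_lt
            rw [hdeg i hi]; exact hilt
          simp [this]
        · intro h'; exact absurd hms h'
      rw [h, Polynomial.coeff_zero] at hcoeff
      have hlead : (p m).coeff m ≠ 0 := by
        have h1 := Polynomial.leadingCoeff_ne_zero.mpr (hp0 m hms)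
        rwa [Polynomial.leadingCoeff, hdeg m hms] at h1
      exact (mul_eq_zero.mp hcoeff.symm).resolve_right hlead
    have hsum' : ∑ i ∈ s.erase m, c i • p i = 0 := by
      rw [← Finset.add_sum_erase s _ hms, hcm, zero_smul, zero_add] at h
      exact h
    have := ih (s.erase m) (Finset.erase_ssubset hms)
      (fun i hi => hp0 i (Finset.mem_of_mem_erase hi))
      (fun i hi => hdeg i (Finset.mem_of_mem_erase hi)) hsum'
    intro i hi
    rcases eq_or_ne i m with rfl | hne
    · exact hcm
    · exact this i (Finset.mem_erase.mpr ⟨hne, hi⟩)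

open Polynomial in
/-- Lemma 7: for an evaluation code `𝒞 = ev_{α,ν}(Δ)`, the Schur square satisfies
`𝒞² = ev_{α,ν²}(span{fg : f,g ∈ Δ})` and
`dim 𝒞² ≥ |{deg(fg) : f,g ∈ Δ, deg(fg) < n}|`. -/
theorem stmt_17 {F : Type*} [Field F] (n : ℕ)
    (a : Fin n → F) (ha : Function.Injective a)
    (v : Fin n → F) (hv : ∀ i, v i ≠ 0)
    (Δ : Submodule F (Polynomial F))
    (Code : Set (Fin n → F))
    (hCode : Code = {w | ∃ f ∈ Δ, w = fun r => v r * f.eval (a r)})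
    (Sq : Submodule F (Fin n → F))
    (hSq : Sq = Submodule.span F {w | ∃ x ∈ Code, ∃ y ∈ Code, w = x * y}) :
    (Sq : Set (Fin n → F)) =
      {w | ∃ g ∈ Submodule.span F {p : Polynomial F | ∃ f ∈ Δ, ∃ h ∈ Δ, p = f * h},
        w = fun r => (v r) ^ 2 * g.eval (a r)} ∧
    Set.ncard {d : ℕ | ∃ f ∈ Δ, ∃ h ∈ Δ, f * h ≠ 0 ∧ (f * h).natDegree = d ∧ d < n} ≤
      Module.finrank F Sq := by
  classical
  -- the evaluation map with multipliers v²
  set ev2 : Polynomial F →ₗ[F] (Fin n → F) :=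
    LinearMap.pi (fun r => (v r) ^ 2 • Polynomial.leval (a r)) with hev2
  have hev2apply : ∀ g r, ev2 g r = (v r) ^ 2 * g.eval (a r) := by
    intro g r
    simp [hev2, LinearMap.pi_apply]
  set T : Set (Polynomial F) := {p : Polynomial F | ∃ f ∈ Δ, ∃ h ∈ Δ, p = f * h} with hT
  have himg : {w | ∃ x ∈ Code, ∃ y ∈ Code, w = x * y} = ev2 '' T := by
    ext w
    constructor
    · rintro ⟨x, hx, y, hy, rfl⟩
      rw [hCode] at hx hy
      obtain ⟨f, hf, rfl⟩ := hx
      obtain ⟨g, hg, rfl⟩ := hy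
      refine ⟨f * g, ⟨f, hf, g, hg, rfl⟩, ?_⟩
      funext r
      rw [hev2apply]
      simp [Pi.mul_apply]
      ring
    · rintro ⟨p, ⟨f, hf, g, hg, rfl⟩, rfl⟩
      refine ⟨fun r => v r * f.eval (a r), ?_, fun r => v r * g.eval (a r), ?_, ?_⟩
      · rw [hCode]; exact ⟨f, hf, rfl⟩
      · rw [hCode]; exact ⟨g, hg, rfl⟩
      · funext r
        rw [hev2apply]
        simp [Pi.mul_apply]
        ring
  have hSqmap : Sq = Submodule.map ev2 (Submodule.span F T) := by
    rw [hSq, himg, ← Submodule.map_span]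
  constructor
  · rw [hSqmap]
    ext w
    simp only [Submodule.map_coe, Set.mem_image, Set.mem_setOf_eq]
    constructor
    · rintro ⟨g, hg, rfl⟩
      exact ⟨g, hg, funext fun r => (hev2apply g r).symm⟩
    · rintro ⟨g, hg, rfl⟩
      exact ⟨g, hg, funext fun r => hev2apply g r⟩
  · -- dimension bound
    set D : Set ℕ := {d : ℕ | ∃ f ∈ Δ, ∃ h ∈ Δ, f * h ≠ 0 ∧ (f * h).natDegree = d ∧ d < n}
      with hD
    have hDfin : D.Finite := Set.Finite.subset (Set.finite_Iio n)
      (fun d hd => by obtain ⟨f, _, h, _, _, _, hlt⟩ := hd; exact hlt)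
    -- choose polynomials
    have hchoice : ∀ d : D, ∃ p : Polynomial F, p ∈ T ∧ p ≠ 0 ∧ p.natDegree = (d : ℕ) := by
      rintro ⟨d, f, hf, h, hh, hne, hdeg, hlt⟩
      exact ⟨f * h, ⟨f, hf, h, hh, rfl⟩, hne, hdeg⟩
    choose p hpT hp0 hpdeg using hchoice
    have hmem : ∀ d : D, ev2 (p d) ∈ Sq := by
      intro d
      rw [hSqmap]
      exact Submodule.mem_map_of_mem (Submodule.subset_span (hpT d))
    -- linear independence of the evaluations
    have hli : LinearIndependent F (fun d : D => (⟨ev2 (p d), hmem d⟩ : Sq)) := by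
      rw [linearIndependent_iff']
      intro s c hsum i his
      -- project to the ambient space
      have hsum' : ∑ d ∈ s, c d • ev2 (p d) = 0 := by
        have := congrArg (Sq.subtype) hsum
        simpa using this
      set q : Polynomial F := ∑ d ∈ s, c d • p d with hq
      have hevq : ev2 q = 0 := by
        rw [hq, map_sum]
        simpa using hsum'
      have hltn : ∀ d : D, (d : ℕ) < n := by
        rintro ⟨d, f, hf, h, hh, hne, hdeg, hlt⟩
        exact hlt
      have hn : 0 < n := lt_of_le_of_lt (Nat.zero_le _) (hltn i)
      have hqdeg : q.natDegree < n := by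
        have : q.natDegree ≤ n - 1 := by
          apply Polynomial.natDegree_sum_le_of_forall_le
          intro d hd
          calc (c d • p d).natDegree ≤ (p d).natDegree := Polynomial.natDegree_smul_le _ _
            _ = (d : ℕ) := hpdeg d
            _ ≤ n - 1 := Nat.le_sub_one_of_lt (hltn d)
        omega
      have hq0 : q = 0 := by
        apply Polynomial.eq_zero_of_natDegree_lt_card_of_eval_eq_zero q ha
        · intro r
          have := congrFun hevq r
          rw [hev2apply] at this
          simp only [Pi.zero_apply] at this
          have hv2 : (v r) ^ 2 ≠ 0 := pow_ne_zero _ (hv r)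
          exact (mul_eq_zero.mp this).resolve_left hv2
        · simpa using hqdeg
      -- use distinct degrees
      have key := aux_distinct_deg (s.image (fun d : D => (d : ℕ)))
        (fun m => if hm : m ∈ D then p ⟨m, hm⟩ else 0)
        (by rintro m hm
            obtain ⟨d, hd, rfl⟩ := Finset.mem_image.mp hm
            simp only [dif_pos d.2]
            exact hp0 d)
        (by rintro m hm
            obtain ⟨d, hd, rfl⟩ := Finset.mem_image.mp hm
            simp only [dif_pos d.2]
            exact hpdeg d)
        (fun m => if hm : m ∈ D then c ⟨m, hm⟩ else 0)
        (by rw [Finset.sum_image (by intro x _ y _ hxy; exact Subtype.ext hxy)]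
            have hcongr : ∀ x ∈ s,
                (fun m => if hm : m ∈ D then c ⟨m, hm⟩ else 0) (x : ℕ) •
                  (fun m => if hm : m ∈ D then p ⟨m, hm⟩ else 0) (x : ℕ) = c x • p x := by
              intro x hx
              simp only [dif_pos x.2]
            rw [Finset.sum_congr rfl hcongr, ← hq]
            exact hq0)
      have hfin := key (i : ℕ) (Finset.mem_image_of_mem _ his)
      simp only [dif_pos i.2] at hfin
      exact hfin
    have : Fintype D := hDfin.fintype
    have hcard := hli.fintype_card_le_finrank
    calc Set.ncard D = Nat.card D := Nat.card_coe_set_eq D ▸ rfl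
      _ = Fintype.card D := Nat.card_eq_fintype_card
      _ ≤ Module.finrank F Sq := hcard
end
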